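/- arXiv:2302.01655 — 2 statements merged into one kernel-verified Lean document; each statement's English description precedes it below -/
import Mathlib

section
/- Let F be a finite field with q elements and set η = 1 if q is odd and η = 0 if q is even. Then every *-symmetric monic irreducible polynomial over F other than X − 1 and X + 1 has even degree and constant coefficient 1. Moreover, for every n ≥ 1 the number π*(2n) of *-symmetric monic irreducible polynomials of degree 2n over F satisfies π*(2n) = (1/(2n))·∑_{odd d ∣ n} μ(d)·(q^{n/d} − η), and π*(2n) = (q^n − ε·q^{n/3})/(2n) for some real ε with 0 ≤ ε ≤ 3. -/
/-!
Let `α` be a root of a monic irreducible `f` of degree `m` over `F = 𝔽_q`. The Frobenius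
`x ↦ x ^ q` generates `Gal(F(α)/F)` and has order `m`, so the roots of `f` are the conjugates
`α ^ q ^ i`, and `α ^ q ^ i = α ^ q ^ j` iff `i ≡ j [MOD m]`. Now `f` is `*`-symmetric iff `α⁻¹`
is a root as well, i.e. `α⁻¹ = α ^ q ^ d` for some `d`; unless `α = ±1`, applying this twice gives
`m = 2 * d`. Consequently `f` divides `X ^ (q ^ n + 1) - 1` iff `α ^ q ^ n = α⁻¹ = α ^ q ^ d`, iff
`n ≡ d [MOD 2 * d]`, i.e. `d ∣ n` with `n / d` odd; and every irreducible factor of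
`X ^ (q ^ n + 1) - 1` other than `X ± 1` is `*`-symmetric. This polynomial is separable, so
comparing degrees gives `q ^ n + 1 = 1 + η + ∑_{d ∣ n, n/d odd} 2 d π*(2d)`, which Möbius
inversion over the odd divisors turns into the formula for `π*(2n)`. In this identity the terms
with `d ≠ n` have `d ≤ n / 3` and contribute at most `∑_{d ≤ n/3} q ^ d ≤ 2 q ^ (n/3)`, which
bounds `ε`.
-/

open Polynomial

/-- `f` is *-symmetric: `f(0) ≠ 0` and `f* = f`, where `f*(X) = Xⁿ f(1/X)/f(0)`,
expressed via `f.reverse = f(0) • f`. -/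
def IsStarSymm {F : Type} [Field F] (f : F[X]) : Prop :=
  f.coeff 0 ≠ 0 ∧ f.reverse = Polynomial.C (f.coeff 0) * f

open FiniteField

theorem Nat.modEq_two_mul_iff {n d : ℕ} (hd : 0 < d) :
    n ≡ d [MOD 2 * d] ↔ d ∣ n ∧ Odd (n / d) := by
  constructor
  · intro h
    have hn : n = d * (2 * (n / (2 * d)) + 1) := by
      have := Nat.div_add_mod n (2 * d)
      rw [h, Nat.mod_eq_of_lt (by omega)] at this
      linarith
    refine ⟨⟨_, hn⟩, ?_⟩
    rw [hn, Nat.mul_div_cancel_left _ hd]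
    exact odd_two_mul_add_one _
  · rintro ⟨⟨k, rfl⟩, hk⟩
    rw [Nat.mul_div_cancel_left _ hd] at hk
    obtain ⟨j, rfl⟩ := hk
    calc d * (2 * j + 1) = d + 2 * d * j := by ring
      _ ≡ d + 0 [MOD 2 * d] := Nat.ModEq.add_left _ (Nat.modEq_zero_iff_dvd.2 (dvd_mul_right _ _))
      _ = d := add_zero d

theorem Nat.le_div_three_of_odd_div {n d : ℕ} (hdn : d ∣ n) (hodd : Odd (n / d)) (hne : d ≠ n) :
    d ≤ n / 3 := by
  obtain ⟨c, rfl⟩ := hdn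
  have hd0 : 0 < d := Nat.pos_of_ne_zero (by rintro rfl; simp at hodd)
  rw [Nat.mul_div_cancel_left _ hd0] at hodd
  obtain ⟨k, rfl⟩ := hodd
  have hk : 1 ≤ k := Nat.one_le_iff_ne_zero.2 (by rintro rfl; simp at hne)
  rw [Nat.le_div_iff_mul_le three_pos]
  nlinarith

theorem Nat.filter_odd_divisors_two_pow_mul {k m : ℕ} (hm : Odd m) :
    (2 ^ k * m).divisors.filter Odd = m.divisors := by
  ext d
  simp only [Finset.mem_filter, Nat.mem_divisors]
  constructor
  · rintro ⟨⟨hd, hne⟩, hodd⟩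
    exact ⟨(Nat.Coprime.pow_right k (Nat.coprime_two_right.2 hodd)).dvd_of_dvd_mul_left hd,
      by rintro rfl; simp at hne⟩
  · rintro ⟨hd, -⟩
    exact ⟨⟨hd.mul_left _, mul_ne_zero (by positivity) hm.pos.ne'⟩, hm.of_dvd_nat hd⟩

theorem Nat.filter_odd_div_divisors_two_pow_mul {k m : ℕ} (hm : Odd m) :
    (2 ^ k * m).divisors.filter (fun d => Odd (2 ^ k * m / d)) =
      m.divisors.map ⟨(2 ^ k * ·), mul_right_injective₀ (by positivity)⟩ := by
  ext d
  simp only [Finset.mem_filter, Nat.mem_divisors, Finset.mem_map, Function.Embedding.coeFn_mk]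
  constructor
  · rintro ⟨⟨⟨c, hc⟩, hne⟩, hodd⟩
    have hd0 : 0 < d := Nat.pos_of_ne_zero (by rintro rfl; simp_all)
    rw [hc, Nat.mul_div_cancel_left _ hd0] at hodd
    obtain ⟨e, rfl⟩ : 2 ^ k ∣ d :=
      (Nat.Coprime.pow_left k (Nat.coprime_two_left.2 hodd)).dvd_of_dvd_mul_right ⟨m, hc.symm⟩
    refine ⟨e, ⟨⟨c, ?_⟩, hm.pos.ne'⟩, rfl⟩
    rw [mul_assoc] at hc
    exact Nat.eq_of_mul_eq_mul_left (by positivity) hc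
  · rintro ⟨e, ⟨he, -⟩, rfl⟩
    refine ⟨⟨mul_dvd_mul_left _ he, mul_ne_zero (by positivity) hm.pos.ne'⟩, ?_⟩
    rw [Nat.mul_div_mul_left _ _ (by positivity)]
    exact hm.of_dvd_nat (Nat.div_dvd_of_dvd he)

open ArithmeticFunction ArithmeticFunction.Moebius in
/-- Writing `n = 2 ^ k * m` with `m` odd, this is ordinary Möbius inversion on `m` applied to
`e ↦ a (2 ^ k * e)`. -/
theorem sum_filter_odd_divisors_moebius_smul {R : Type*} [AddCommGroup R] {a g : ℕ → R}
    (h : ∀ n, 0 < n → ∑ d ∈ n.divisors with Odd (n / d), a d = g n) {n : ℕ} (hn : 0 < n) :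
    ∑ d ∈ n.divisors with Odd d, μ d • g (n / d) = a n := by
  obtain ⟨k, m, hm, rfl⟩ := Nat.exists_eq_two_pow_mul_odd hn.ne'
  have hinv := (sum_eq_iff_sum_smul_moebius_eq_on {m | Odd m}
    (fun _ _ hd hodd => Odd.of_dvd_nat hodd hd) (f := fun e => a (2 ^ k * e))
    (g := fun e => g (2 ^ k * e))).1 (fun e _ hodd => by
      rw [← h _ (by positivity), Nat.filter_odd_div_divisors_two_pow_mul hodd, Finset.sum_map]
      rfl) m hm.pos hm
  rw [Nat.sum_divisorsAntidiagonal (f := fun x y => μ x • g (2 ^ k * y))] at hinv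
  rw [Nat.filter_odd_divisors_two_pow_mul hm, ← hinv]
  refine Finset.sum_congr rfl fun d hd => ?_
  rw [Nat.mul_div_assoc _ (Nat.dvd_of_mem_divisors hd)]

theorem Nat.sum_pow_le_two_mul_pow {q M : ℕ} {s : Finset ℕ} (hq : 2 ≤ q)
    (hs : ∀ k ∈ s, k ≤ M) : ∑ k ∈ s, q ^ k ≤ 2 * q ^ M := by
  have hlt : ∑ k ∈ s.erase M, q ^ k < q ^ M :=
    Nat.geomSum_lt hq fun k hk => lt_of_le_of_ne (hs k (Finset.mem_of_mem_erase hk))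
      (Finset.ne_of_mem_erase hk)
  calc ∑ k ∈ s, q ^ k ≤ ∑ k ∈ insert M (s.erase M), q ^ k :=
        Finset.sum_le_sum_of_subset (Finset.insert_erase_subset M s)
    _ = q ^ M + ∑ k ∈ s.erase M, q ^ k := Finset.sum_insert (Finset.notMem_erase M s)
    _ ≤ 2 * q ^ M := by omega

theorem exists_eq_pow_sub_mul_rpow {q n c : ℕ} (hq : 1 ≤ q) (hlow : c ≤ q ^ n)
    (hup : q ^ n ≤ c + 1 + 2 * q ^ (n / 3)) :
    ∃ ε : ℝ, 0 ≤ ε ∧ ε ≤ 3 ∧ (c : ℝ) = q ^ n - ε * (q : ℝ) ^ ((n : ℝ) / 3) := by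
  have hq' : (1 : ℝ) ≤ q := by exact_mod_cast hq
  have hone : (1 : ℝ) ≤ (q : ℝ) ^ ((n : ℝ) / 3) := Real.one_le_rpow hq' (by positivity)
  have hfloor : (q : ℝ) ^ (n / 3) ≤ (q : ℝ) ^ ((n : ℝ) / 3) := by
    rw [← Real.rpow_natCast]
    exact Real.rpow_le_rpow_of_exponent_le hq' Nat.cast_div_le
  have hlow' : (c : ℝ) ≤ (q : ℝ) ^ n := by exact_mod_cast hlow
  have hup' : (q : ℝ) ^ n ≤ c + 1 + 2 * (q : ℝ) ^ (n / 3) := by exact_mod_cast hup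
  have hpos : (0 : ℝ) < (q : ℝ) ^ ((n : ℝ) / 3) := by positivity
  refine ⟨((q : ℝ) ^ n - c) / (q : ℝ) ^ ((n : ℝ) / 3), div_nonneg (by linarith) hpos.le, ?_, ?_⟩
  · rw [div_le_iff₀ hpos]
    linarith
  · rw [div_mul_cancel₀ _ hpos.ne']
    ring

theorem Polynomial.sum_natDegree_normalizedFactors {K : Type*} [Field K] [DecidableEq K]
    {p : K[X]} (hp : Squarefree p) :
    ∑ g ∈ (UniqueFactorizationMonoid.normalizedFactors p).toFinset, g.natDegree = p.natDegree := by
  rw [Finset.sum_eq_multiset_sum, Multiset.toFinset_val, Multiset.dedup_eq_self.2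
    ((UniqueFactorizationMonoid.squarefree_iff_nodup_normalizedFactors hp.ne_zero).1 hp),
    ← natDegree_multiset_prod _ (UniqueFactorizationMonoid.zero_notMem_normalizedFactors _),
    natDegree_eq_of_degree_eq (degree_eq_degree_of_associated
      (UniqueFactorizationMonoid.prod_normalizedFactors hp.ne_zero))]

section StarSymmetric

variable {F : Type} [Field F] {f : F[X]}

theorem Polynomial.X_sub_one_eq_X_add_one_iff : (X - 1 : F[X]) = X + 1 ↔ (-1 : F) = 1 := by
  rw [sub_eq_add_neg, add_right_inj, ← C_1, ← C_neg, C_inj]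

theorem IsStarSymm.aeval_inv_eq_zero {L : Type*} [Field L] [Algebra F L] (hf : IsStarSymm f)
    {x : L} (hx : aeval x f = 0) : aeval x⁻¹ f = 0 := by
  rcases eq_or_ne x 0 with rfl | hx0
  · rwa [inv_zero]
  have := invertibleOfNonzero hx0
  have hrev := (eval₂_reverse_eq_zero_iff (algebraMap F L) x f).2 hx
  rw [hf.2, eval₂_mul, eval₂_C, invOf_eq_inv] at hrev
  exact (mul_eq_zero.1 hrev).resolve_left ((_root_.map_ne_zero _).2 hf.1)

theorem isStarSymm_of_aeval_inv_eq_zero {L : Type*} [Field L] [Algebra F L] (hmo : f.Monic)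
    (hirr : Irreducible f) {x : L} (hx0 : x ≠ 0) (hx : aeval x f = 0)
    (hxinv : aeval x⁻¹ f = 0) : IsStarSymm f := by
  have hcoeff : f.coeff 0 ≠ 0 := by
    rw [minpoly.eq_of_irreducible_of_monic hirr hx hmo]
    exact minpoly.coeff_zero_ne_zero ⟨f, hmo, hx⟩ hx0
  have := invertibleOfNonzero (inv_ne_zero hx0)
  have hrev : f ∣ f.reverse := by
    rw [← hirr.dvd_iff_aeval_eq_zero hx, aeval_def, ← inv_inv x, ← invOf_eq_inv,
      eval₂_reverse_eq_zero_iff]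
    exact hxinv
  refine ⟨hcoeff, ?_⟩
  rw [eq_leadingCoeff_mul_of_monic_of_dvd_of_natDegree_le hmo hrev (reverse_natDegree_le f),
    reverse_leadingCoeff, trailingCoeff_eq_coeff_zero hcoeff]

theorem IsStarSymm.coeff_zero_eq_one (hmo : f.Monic) (hirr : Irreducible f) (hf : IsStarSymm f)
    (hne : f ≠ X - 1) : f.coeff 0 = 1 := by
  have hsq : f.coeff 0 * f.coeff 0 = 1 := by
    simpa [coeff_zero_reverse, hmo.leadingCoeff] using (congrArg (coeff · 0) hf.2).symm
  refine (mul_self_eq_one_iff.1 hsq).elim id fun hneg => ?_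
  have : Invertible (1 : F) := invertibleOne
  have htwo : (1 + 1) * eval 1 f = 0 := by
    have heval : f.coeff 0 * eval 1 f = eval 1 f := by
      simpa [hf.2] using eval₂_reverse_mul_pow (RingHom.id F) 1 f
    rw [hneg] at heval
    linear_combination -heval
  have hf1 : eval 1 f ≠ 0 := fun h => hne <| by
    rw [minpoly.eq_of_irreducible_of_monic hirr (by rwa [coe_aeval_eq_eval]) hmo,
      minpoly.eq_X_sub_C', C_1]
  rw [hneg, neg_eq_iff_add_eq_zero]
  exact (mul_eq_zero.1 htwo).resolve_right hf1

namespace AdjoinRoot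

variable [Fact (Irreducible f)]

instance : Module.Finite F (AdjoinRoot f) :=
  (powerBasis (Fact.out : Irreducible f).ne_zero).finite

theorem finrank_eq_natDegree : Module.finrank F (AdjoinRoot f) = f.natDegree :=
  finrank_quotient_span_eq_natDegree

theorem aeval_root : aeval (root f) f = 0 := by rw [aeval_eq, mk_self]

theorem root_ne_zero (hf : f.coeff 0 ≠ 0) : root f ≠ 0 := fun h => hf <| by
  have := coeff_zero_eq_aeval_zero' (A := AdjoinRoot f) f
  rwa [← h, aeval_eq, mk_self, map_eq_zero_iff _ (algebraMap F _).injective] at this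

variable [Fintype F]

instance : Finite (AdjoinRoot f) := Module.finite_of_finite F

theorem frobeniusAlgEquivOfAlgebraic_pow_apply (i : ℕ) (x : AdjoinRoot f) :
    (frobeniusAlgEquivOfAlgebraic F (AdjoinRoot f) ^ i) x = x ^ Fintype.card F ^ i := by
  rw [AlgEquiv.coe_pow, coe_frobeniusAlgEquivOfAlgebraic_iterate]

theorem root_pow_card_pow_eq_iff {i j : ℕ} :
    root f ^ Fintype.card F ^ i = root f ^ Fintype.card F ^ j ↔ i ≡ j [MOD f.natDegree] := by
  have horder := orderOf_frobeniusAlgEquivOfAlgebraic F (AdjoinRoot f)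
  rw [finrank_eq_natDegree] at horder
  rw [← frobeniusAlgEquivOfAlgebraic_pow_apply, ← frobeniusAlgEquivOfAlgebraic_pow_apply,
    ← horder, ← pow_eq_pow_iff_modEq]
  exact ⟨fun h => AlgEquiv.coe_toAlgHom_injective (algHom_ext h), fun h => by rw [h]⟩

theorem aeval_root_pow_card_pow (i : ℕ) : aeval (root f ^ Fintype.card F ^ i) f = 0 := by
  rw [← frobeniusAlgEquivOfAlgebraic_pow_apply, aeval_algEquiv, AlgHom.comp_apply, aeval_root,
    map_zero]

theorem exists_root_pow_card_pow_eq {β : AdjoinRoot f} (hβ : aeval β f = 0) :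
    ∃ i < f.natDegree, root f ^ Fintype.card F ^ i = β := by
  obtain ⟨⟨i, hi⟩, hσ : frobeniusAlgEquivOfAlgebraic F _ ^ i = _⟩ :=
    (bijective_frobeniusAlgEquivOfAlgebraic_pow F (AdjoinRoot f)).2
      ((Algebra.IsAlgebraic.algEquivEquivAlgHom F (AdjoinRoot f)).symm
        (liftAlgHom f (Algebra.ofId F _) β hβ))
  refine ⟨i, hi.trans_eq finrank_eq_natDegree, ?_⟩
  rw [← frobeniusAlgEquivOfAlgebraic_pow_apply, hσ]
  exact liftAlgHom_root f (Algebra.ofId F _) β hβ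

theorem _root_.IsStarSymm.exists_root_pow_card_pow_eq_inv (hmo : f.Monic) (hf : IsStarSymm f)
    (h1 : f ≠ X - 1) (h2 : f ≠ X + 1) :
    ∃ d, f.natDegree = 2 * d ∧ root f ^ Fintype.card F ^ d = (root f)⁻¹ := by
  have hminpoly := minpoly.eq_of_irreducible_of_monic Fact.out aeval_root hmo
  have hinv : aeval (root f)⁻¹ f = 0 := hf.aeval_inv_eq_zero aeval_root
  obtain ⟨d, hd, hα⟩ := exists_root_pow_card_pow_eq hinv
  have hd0 : d ≠ 0 := by
    rintro rfl
    rw [pow_zero, pow_one, ← mul_eq_one_iff_eq_inv₀ (root_ne_zero hf.1)] at hα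
    rcases mul_self_eq_one_iff.1 hα with h | h
    · exact h1 (by rw [hminpoly, h, ← map_one (algebraMap F _), minpoly.eq_X_sub_C, C_1])
    · exact h2 (by rw [hminpoly, h, ← map_one (algebraMap F _), ← map_neg, minpoly.eq_X_sub_C,
        C_neg, C_1, sub_neg_eq_add])
  have hfix : root f ^ Fintype.card F ^ (d + d) = root f ^ Fintype.card F ^ 0 := by
    rw [pow_add, pow_mul, hα, inv_pow, hα, inv_inv, pow_zero, pow_one]
  have hdvd := Nat.modEq_zero_iff_dvd.1 (root_pow_card_pow_eq_iff.1 hfix)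
  exact ⟨d, by rw [← Nat.eq_of_dvd_of_lt_two_mul (by omega) hdvd (by omega), two_mul], hα⟩

end AdjoinRoot

open AdjoinRoot in
theorem Polynomial.dvd_X_pow_card_pow_add_one_sub_one_iff [Fintype F] (hmo : f.Monic)
    (hirr : Irreducible f) (h1 : f ≠ X - 1) (h2 : f ≠ X + 1) (n : ℕ) :
    f ∣ X ^ (Fintype.card F ^ n + 1) - 1 ↔
      IsStarSymm f ∧ ∃ d, f.natDegree = 2 * d ∧ d ∣ n ∧ Odd (n / d) := by
  have := Fact.mk hirr
  rw [← hirr.dvd_iff_aeval_eq_zero aeval_root, map_sub, map_pow, aeval_X, map_one, sub_eq_zero,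
    pow_succ]
  constructor
  · intro h
    have hinv := eq_inv_of_mul_eq_one_left h
    have hf := isStarSymm_of_aeval_inv_eq_zero hmo hirr (right_ne_zero_of_mul_eq_one h)
      aeval_root (hinv ▸ aeval_root_pow_card_pow n)
    obtain ⟨d, hd, hα⟩ := hf.exists_root_pow_card_pow_eq_inv hmo h1 h2
    refine ⟨hf, d, hd, (Nat.modEq_two_mul_iff (by linarith [hirr.natDegree_pos])).1 ?_⟩
    exact hd ▸ root_pow_card_pow_eq_iff.1 (hinv.trans hα.symm)
  · rintro ⟨hf, d, hd, hnd⟩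
    have hd0 : 0 < d := by linarith [hirr.natDegree_pos]
    obtain ⟨d', hd', hα⟩ := hf.exists_root_pow_card_pow_eq_inv hmo h1 h2
    obtain rfl : d' = d := by omega
    rw [root_pow_card_pow_eq_iff.2 (hd ▸ (Nat.modEq_two_mul_iff hd0).2 hnd), hα,
      inv_mul_cancel₀ (root_ne_zero hf.1)]

section Counting

variable (F) [Fintype F]

def starIrreducibles (d : ℕ) : Set F[X] :=
  {f | f.Monic ∧ Irreducible f ∧ IsStarSymm f ∧ f.natDegree = 2 * d}

variable {F}

theorem FiniteField.neg_one_eq_one_iff_even_card : (-1 : F) = 1 ↔ Even (Fintype.card F) := by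
  rw [neg_one_eq_one_iff, FiniteField.even_card_iff_char_two, Nat.even_iff]

theorem sum_natDegree_X_sub_one_X_add_one [DecidableEq F] :
    ∑ g ∈ ({X - 1, X + 1} : Finset F[X]), g.natDegree =
      1 + if Odd (Fintype.card F) then 1 else 0 := by
  have hX1 : (X - 1 : F[X]).natDegree = 1 := by rw [← C_1, natDegree_X_sub_C]
  by_cases hodd : Odd (Fintype.card F)
  · have hne : (X - 1 : F[X]) ≠ X + 1 := by
      rwa [Ne, X_sub_one_eq_X_add_one_iff, FiniteField.neg_one_eq_one_iff_even_card,
        Nat.not_even_iff_odd]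
    rw [Finset.sum_pair hne, hX1, ← C_1, natDegree_X_add_C, if_pos hodd]
  · have heq : (X - 1 : F[X]) = X + 1 := by
      rwa [X_sub_one_eq_X_add_one_iff, FiniteField.neg_one_eq_one_iff_even_card,
        ← Nat.not_odd_iff_even]
    rw [heq, Finset.pair_eq_singleton, Finset.sum_singleton, ← heq, hX1, if_neg hodd]

theorem X_add_one_dvd_X_pow_card_pow_add_one_sub_one (n : ℕ) :
    (X + 1 : F[X]) ∣ X ^ (Fintype.card F ^ n + 1) - 1 := by
  rw [← sub_neg_eq_add, ← C_1, ← C_neg, dvd_iff_isRoot, IsRoot, eval_sub, eval_pow, eval_X,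
    eval_C]
  by_cases h : (-1 : F) = 1
  · rw [h, one_pow, sub_self]
  · have hodd : Odd (Fintype.card F) := by
      rwa [FiniteField.neg_one_eq_one_iff_even_card, Nat.not_even_iff_odd] at h
    rw [(hodd.pow.add_one).neg_one_pow, sub_self]

theorem irreducible_monic_dvd_of_mem_X_sub_one_X_add_one [DecidableEq F] {g : F[X]}
    (hg : g ∈ ({X - 1, X + 1} : Finset F[X])) (n : ℕ) :
    Irreducible g ∧ g.Monic ∧ g ∣ X ^ (Fintype.card F ^ n + 1) - 1 := by
  rw [Finset.mem_insert, Finset.mem_singleton] at hg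
  rcases hg with rfl | rfl
  · refine ⟨?_, ?_, by simpa only [one_pow] using sub_dvd_pow_sub_pow (X : F[X]) 1 _⟩
    · simpa using irreducible_X_sub_C (1 : F)
    · simpa using monic_X_sub_C (1 : F)
  · refine ⟨?_, ?_, X_add_one_dvd_X_pow_card_pow_add_one_sub_one n⟩
    · simpa using irreducible_X_sub_C (-1 : F)
    · simpa using monic_X_add_C (1 : F)

theorem natDegree_div_two_mem_of_dvd_X_pow_card_pow_add_one_sub_one {n : ℕ} (hn : 0 < n)
    {g : F[X]} (hirr : Irreducible g) (hmo : g.Monic) (h1 : g ≠ X - 1) (h2 : g ≠ X + 1)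
    (hdvd : g ∣ X ^ (Fintype.card F ^ n + 1) - 1) :
    g.natDegree / 2 ∈ n.divisors.filter (fun d => Odd (n / d)) := by
  obtain ⟨-, d, hdeg, hdn, hodd⟩ :=
    (dvd_X_pow_card_pow_add_one_sub_one_iff hmo hirr h1 h2 n).1 hdvd
  rw [hdeg, Nat.mul_div_cancel_left _ two_pos]
  exact Finset.mem_filter.2 ⟨Nat.mem_divisors.2 ⟨hdn, hn.ne'⟩, hodd⟩

theorem mem_starIrreducibles_iff {n d : ℕ} (hd : d ∈ n.divisors.filter (fun d => Odd (n / d)))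
    {g : F[X]} : g ∈ starIrreducibles F d ↔
      (Irreducible g ∧ g.Monic ∧ g ∣ X ^ (Fintype.card F ^ n + 1) - 1) ∧
        (g ≠ X - 1 ∧ g ≠ X + 1) ∧ g.natDegree / 2 = d := by
  rw [Finset.mem_filter, Nat.mem_divisors] at hd
  constructor
  · rintro ⟨hmo, hirr, hss, hdeg⟩
    have hd0 : 0 < d := Nat.pos_of_dvd_of_pos hd.1.1 (Nat.pos_of_ne_zero hd.1.2)
    have h1 : g ≠ X - 1 := by rintro rfl; rw [← C_1, natDegree_X_sub_C] at hdeg; omega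
    have h2 : g ≠ X + 1 := by rintro rfl; rw [← C_1, natDegree_X_add_C] at hdeg; omega
    exact ⟨⟨hirr, hmo, (dvd_X_pow_card_pow_add_one_sub_one_iff hmo hirr h1 h2 n).2
      ⟨hss, d, hdeg, hd.1.1, hd.2⟩⟩, ⟨h1, h2⟩, by omega⟩
  · rintro ⟨⟨hirr, hmo, hdvd⟩, ⟨h1, h2⟩, rfl⟩
    obtain ⟨hss, d, hdeg, -⟩ := (dvd_X_pow_card_pow_add_one_sub_one_iff hmo hirr h1 h2 n).1 hdvd
    exact ⟨hmo, hirr, hss, by omega⟩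

/-- Degree count in the factorization of the separable polynomial `X ^ (q ^ n + 1) - 1`. -/
theorem sum_two_mul_mul_ncard_starIrreducibles_add {n : ℕ} (hn : 0 < n) :
    ∑ d ∈ n.divisors with Odd (n / d), 2 * d * (starIrreducibles F d).ncard +
      (if Odd (Fintype.card F) then 1 else 0) = Fintype.card F ^ n := by
  classical
  set P : F[X] := X ^ (Fintype.card F ^ n + 1) - 1
  have hsq : Squarefree P := by
    have hN : ((Fintype.card F ^ n + 1 : ℕ) : F) ≠ 0 := by simp [hn.ne']
    simpa using (separable_X_pow_sub_C (1 : F) hN one_ne_zero).squarefree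
  have hP : P.natDegree = Fintype.card F ^ n + 1 := by
    simp only [P]
    rw [← C_1, natDegree_X_pow_sub_C]
  set D := (UniqueFactorizationMonoid.normalizedFactors P).toFinset
  have hD : ∀ g, g ∈ D ↔ Irreducible g ∧ g.Monic ∧ g ∣ P := fun g =>
    Multiset.mem_toFinset.trans (Polynomial.mem_normalizedFactors_iff hsq.ne_zero)
  set E : Finset F[X] := {X - 1, X + 1}
  have hED : E ⊆ D := fun g hg => (hD g).2 (irreducible_monic_dvd_of_mem_X_sub_one_X_add_one hg n)
  have hmem : ∀ g, g ∈ D \ E ↔ (Irreducible g ∧ g.Monic ∧ g ∣ P) ∧ (g ≠ X - 1 ∧ g ≠ X + 1) :=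
    fun g => by simp only [Finset.mem_sdiff, hD, E, Finset.mem_insert, Finset.mem_singleton, not_or]
  have hfiber : ∀ d ∈ n.divisors.filter (fun d => Odd (n / d)),
      ∑ g ∈ D \ E with g.natDegree / 2 = d, g.natDegree = 2 * d * (starIrreducibles F d).ncard := by
    intro d hd
    have hset : ((D \ E).filter (fun g => g.natDegree / 2 = d) : Set F[X]) =
        starIrreducibles F d := by
      ext g
      rw [mem_starIrreducibles_iff hd, Finset.coe_filter, Set.mem_ofPred_eq, hmem, and_assoc]
    rw [← hset, Set.ncard_coe_finset, mul_comm, ← smul_eq_mul, ← Finset.sum_const]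
    exact Finset.sum_congr rfl fun g hg => (hset ▸ hg : g ∈ starIrreducibles F d).2.2.2
  have hmaps : ∀ g ∈ D \ E, g.natDegree / 2 ∈ n.divisors.filter (fun d => Odd (n / d)) := by
    intro g hg
    obtain ⟨⟨hirr, hmo, hdvd⟩, h1, h2⟩ := (hmem g).1 hg
    exact natDegree_div_two_mem_of_dvd_X_pow_card_pow_add_one_sub_one hn hirr hmo h1 h2 hdvd
  have htotal := sum_natDegree_normalizedFactors hsq
  rw [← Finset.sum_sdiff hED, sum_natDegree_X_sub_one_X_add_one,
    ← Finset.sum_fiberwise_of_maps_to hmaps, Finset.sum_congr rfl hfiber, hP] at htotal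
  omega

theorem two_mul_mul_ncard_starIrreducibles_add_le {n : ℕ} (hn : 0 < n) :
    2 * n * (starIrreducibles F n).ncard + (if Odd (Fintype.card F) then 1 else 0) ≤
      Fintype.card F ^ n := by
  rw [← sum_two_mul_mul_ncard_starIrreducibles_add hn]
  gcongr
  refine Finset.single_le_sum (f := fun d => 2 * d * (starIrreducibles F d).ncard)
    (fun _ _ => Nat.zero_le _) (Finset.mem_filter.2 ⟨Nat.mem_divisors_self n hn.ne', ?_⟩)
  rw [Nat.div_self hn]
  exact odd_one

theorem pow_le_two_mul_mul_ncard_starIrreducibles_add {n : ℕ} (hn : 0 < n) :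
    Fintype.card F ^ n ≤
      2 * n * (starIrreducibles F n).ncard + 1 + 2 * Fintype.card F ^ (n / 3) := by
  set T := n.divisors.filter (fun d => Odd (n / d))
  have hnT : n ∈ T :=
    Finset.mem_filter.2 ⟨Nat.mem_divisors_self n hn.ne', by rw [Nat.div_self hn]; exact odd_one⟩
  have hsmall : ∀ d ∈ T.erase n, d ≤ n / 3 := fun d hd => by
    obtain ⟨hdn, hd⟩ := Finset.mem_erase.1 hd
    obtain ⟨hd, hodd⟩ := Finset.mem_filter.1 hd
    exact Nat.le_div_three_of_odd_div (Nat.dvd_of_mem_divisors hd) hodd hdn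
  have hrest :
      ∑ d ∈ T.erase n, 2 * d * (starIrreducibles F d).ncard ≤ 2 * Fintype.card F ^ (n / 3) :=
    calc ∑ d ∈ T.erase n, 2 * d * (starIrreducibles F d).ncard
        ≤ ∑ d ∈ T.erase n, Fintype.card F ^ d := Finset.sum_le_sum fun d hd =>
          (Nat.le_add_right _ _).trans (two_mul_mul_ncard_starIrreducibles_add_le
            (Nat.pos_of_mem_divisors (Finset.mem_filter.1 (Finset.mem_of_mem_erase hd)).1))
      _ ≤ 2 * Fintype.card F ^ (n / 3) := Nat.sum_pow_le_two_mul_pow Fintype.one_lt_card hsmall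
  have htotal := sum_two_mul_mul_ncard_starIrreducibles_add (F := F) hn
  rw [← Finset.add_sum_erase T _ hnT] at htotal
  split_ifs at htotal <;> omega

open ArithmeticFunction in
theorem two_mul_mul_ncard_starIrreducibles {n : ℕ} (hn : 0 < n) :
    2 * (n : ℝ) * (starIrreducibles F n).ncard =
      ∑ d ∈ n.divisors with Odd d, (moebius d : ℝ) *
        ((Fintype.card F : ℝ) ^ (n / d) - if Odd (Fintype.card F) then 1 else 0) := by
  have hsum : ∀ m : ℕ, 0 < m → ∑ d ∈ m.divisors with Odd (m / d), 2 * (d : ℝ) *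
      (starIrreducibles F d).ncard =
        (Fintype.card F : ℝ) ^ m - if Odd (Fintype.card F) then 1 else 0 := fun m hm => by
    rw [eq_sub_iff_add_eq]
    exact_mod_cast sum_two_mul_mul_ncard_starIrreducibles_add hm
  simpa only [zsmul_eq_mul] using (sum_filter_odd_divisors_moebius_smul hsum hn).symm

end Counting

end StarSymmetric

/-- **Prime polynomial theorem for *-symmetric polynomials.**
Apart from `X - 1` and `X + 1`, every *-symmetric monic irreducible polynomial over a finite
field with `q` elements has even degree and constant coefficient `1`; moreover the number of
*-symmetric monic irreducibles of degree `2n` is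
`(1/(2n)) ∑_{odd d ∣ n} μ(d)(q^{n/d} - η)` with `η = 1` for odd `q` and `η = 0` for even `q`,
and equals `(qⁿ - ε q^{n/3})/(2n)` with `0 ≤ ε ≤ 3`. -/
theorem stmt1 (F : Type) [Field F] [Fintype F] (q : ℕ) (hq : Fintype.card F = q) :
    (∀ f : F[X], f.Monic → Irreducible f → IsStarSymm f → f ≠ X - 1 → f ≠ X + 1 →
      Even f.natDegree ∧ f.coeff 0 = 1) ∧
    ∀ n : ℕ, 1 ≤ n →
      (({f : F[X] | f.Monic ∧ Irreducible f ∧ IsStarSymm f ∧ f.natDegree = 2 * n}.ncard : ℝ) =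
        (1 / (2 * (n : ℝ))) * ∑ d ∈ n.divisors.filter (fun d => Odd d),
          (ArithmeticFunction.moebius d : ℝ) *
            ((q : ℝ) ^ (n / d) - (if Odd q then 1 else 0))) ∧
      ∃ ε : ℝ, 0 ≤ ε ∧ ε ≤ 3 ∧
        ({f : F[X] | f.Monic ∧ Irreducible f ∧ IsStarSymm f ∧ f.natDegree = 2 * n}.ncard : ℝ) =
          ((q : ℝ) ^ n - ε * (q : ℝ) ^ ((n : ℝ) / 3)) / (2 * (n : ℝ)) := by
  subst hq
  refine ⟨fun f hmo hirr hf h1 h2 => ?_, fun n hn => ?_⟩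
  · have := Fact.mk hirr
    obtain ⟨d, hd, -⟩ := hf.exists_root_pow_card_pow_eq_inv hmo h1 h2
    exact ⟨⟨d, by omega⟩, hf.coeff_zero_eq_one hmo hirr h1⟩
  have h2n : (2 * (n : ℝ)) ≠ 0 := by positivity
  obtain ⟨ε, hε0, hε3, hε⟩ := exists_eq_pow_sub_mul_rpow Fintype.card_pos
    ((Nat.le_add_right _ _).trans (two_mul_mul_ncard_starIrreducibles_add_le (F := F) hn))
    (pow_le_two_mul_mul_ncard_starIrreducibles_add hn)
  refine ⟨?_, ε, hε0, hε3, ?_⟩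
  · rw [← two_mul_mul_ncard_starIrreducibles hn, one_div, inv_mul_cancel_left₀ h2n]
    rfl
  · rw [eq_div_iff h2n, mul_comm, ← hε]
    push_cast
    rfl
end

section
/- Let G be a finite group acting transitively on a nonempty finite set Ω, and let H be a normal subgroup of G. Call an element a derangement if it fixes no point of Ω. Let δ_cc(G, Ω) be the proportion of conjugacy classes of G all of whose elements are derangements (among all conjugacy classes of G), and let δ_cc(H, Ω) be the proportion of conjugacy classes of H all of whose elements are derangements on Ω (among all conjugacy classes of H, where H acts on Ω by restriction). Then δ_cc(G, Ω) ≥ δ_cc(H, Ω)/[G : H]². -/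
/-!
Counting commuting pairs gives `k(G)·|G| = #{(x, y) | xy = yx}`, and
`|C_G(x)| ≤ [G:H]·|C_H(x)|`; applying this bound once in each coordinate of a commuting pair
yields `k(G) ≤ [G:H]·k(H)`. On the other side, fusing `H`-classes into `G`-classes sends
derangement classes to derangement classes, and the `H`-classes fused into one `G`-class are
the conjugates of one of them under `G`, with `H` acting trivially, so there are at most `[G:H]`
of them. Hence `H` has at most `[G:H]` times as many derangement classes as `G`, and the two
bounds combine to the claim.
-/

theorem Set.ncard_le_mul_ncard_of_mapsTo {α β : Type*} [Finite α] [Finite β] {f : α → β}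
    {s : Set α} {t : Set β} (hf : Set.MapsTo f s t) (n : ℕ)
    (hn : ∀ b ∈ t, (f ⁻¹' {b}).ncard ≤ n) : s.ncard ≤ n * t.ncard := by
  classical
  have := Fintype.ofFinite α
  have := Fintype.ofFinite β
  simp only [Set.ncard_eq_toFinset_card'] at hn ⊢
  refine Finset.card_le_mul_card_image_of_maps_to
    (fun a ha => by simpa using hf (by simpa using ha)) n fun b hb => ?_
  exact (Finset.card_le_card fun a => by simp).trans (hn b (by simpa using hb))

theorem IsConj.forall_smul_ne {G Ω : Type*} [Group G] [MulAction G Ω] {g g' : G}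
    (hc : IsConj g g') (hg : ∀ ω : Ω, g • ω ≠ ω) (ω : Ω) : g' • ω ≠ ω := by
  obtain ⟨c, rfl⟩ := isConj_iff.mp hc
  intro hω
  rw [mul_smul, mul_smul, smul_eq_iff_eq_inv_smul] at hω
  exact hg _ hω

namespace Subgroup

variable {G : Type*} [Group G]

theorem card_le_index_mul_card_subgroupOf (H K : Subgroup G) [H.FiniteIndex] :
    Nat.card K ≤ H.index * Nat.card (H.subgroupOf K) := by
  rw [← (H.subgroupOf K).card_mul_index, mul_comm]
  refine Nat.mul_le_mul_right _ ?_
  calc H.relIndex K ≤ H.relIndex ⊤ :=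
        H.relIndex_le_of_le_right le_top (H.relIndex_top_right ▸ FiniteIndex.index_ne_zero)
    _ = H.index := H.relIndex_top_right

theorem card_commute_le_index_mul (H : Subgroup G) [H.FiniteIndex] (x : G) :
    Nat.card {y : G // Commute x y} ≤ H.index * Nat.card {h : H // Commute x h} := by
  have commute_iff_mem {y : G} : Commute x y ↔ y ∈ centralizer {x} :=
    Commute.symm_iff.trans mem_centralizer_singleton_iff.symm
  have eG : {y : G // Commute x y} ≃ centralizer {x} :=
    Equiv.subtypeEquivRight fun _ => commute_iff_mem
  have eH : {h : H // Commute x h} ≃ H.subgroupOf (centralizer {x}) :=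
    { toFun := fun h => ⟨⟨h, commute_iff_mem.mp h.2⟩, h.1.2⟩
      invFun := fun k => ⟨⟨k, k.2⟩, commute_iff_mem.mpr k.1.2⟩
      left_inv := fun _ => rfl
      right_inv := fun _ => rfl }
  rw [Nat.card_congr eG, Nat.card_congr eH]
  exact H.card_le_index_mul_card_subgroupOf _

variable [Finite G]

theorem card_commute_pairs_le_index_mul {α : Type*} [Finite α] (H : Subgroup G) (f : α → G) :
    Nat.card {p : α × G // Commute (f p.1) p.2} ≤
      H.index * Nat.card {p : α × H // Commute (f p.1) p.2} := by
  have := Fintype.ofFinite α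
  rw [Nat.card_congr (Equiv.subtypeProdEquivSigmaSubtype fun a (y : G) => Commute (f a) y),
    Nat.card_congr (Equiv.subtypeProdEquivSigmaSubtype fun a (h : H) => Commute (f a) h),
    Nat.card_sigma, Nat.card_sigma, Finset.mul_sum]
  exact Finset.sum_le_sum fun a _ => H.card_commute_le_index_mul (f a)

theorem card_commute_le_index_sq_mul (H : Subgroup G) :
    Nat.card {p : G × G // Commute p.1 p.2} ≤
      H.index ^ 2 * Nat.card {p : H × H // Commute p.1 p.2} := by
  have swap : {p : G × H // Commute p.1 (p.2 : G)} ≃ {p : H × G // Commute (p.1 : G) p.2} :=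
    (Equiv.prodComm G H).subtypeEquiv fun _ => Commute.symm_iff
  have coe : {p : H × H // Commute (p.1 : G) p.2} ≃ {p : H × H // Commute p.1 p.2} :=
    Equiv.subtypeEquivRight fun _ => Submonoid.commute_coe_coe
  calc Nat.card {p : G × G // Commute p.1 p.2}
      ≤ H.index * Nat.card {p : G × H // Commute p.1 (p.2 : G)} :=
        H.card_commute_pairs_le_index_mul id
    _ = H.index * Nat.card {p : H × G // Commute (p.1 : G) p.2} := by rw [Nat.card_congr swap]
    _ ≤ H.index * (H.index * Nat.card {p : H × H // Commute (p.1 : G) p.2}) :=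
        Nat.mul_le_mul_left _ (H.card_commute_pairs_le_index_mul Subtype.val)
    _ = H.index ^ 2 * Nat.card {p : H × H // Commute p.1 p.2} := by
        rw [Nat.card_congr coe]; ring

theorem card_conjClasses_le_index_mul (H : Subgroup G) :
    Nat.card (ConjClasses G) ≤ H.index * Nat.card (ConjClasses H) := by
  have h := H.card_commute_le_index_sq_mul
  rw [card_comm_eq_card_conjClasses_mul_card, card_comm_eq_card_conjClasses_mul_card,
    ← H.card_mul_index] at h
  refine Nat.le_of_mul_le_mul_right (c := Nat.card H * H.index) ?_
    (H.card_mul_index ▸ Nat.card_pos)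
  calc _ ≤ H.index ^ 2 * (Nat.card (ConjClasses H) * Nat.card H) := h
    _ = _ := by ring

theorem ncard_preimage_map_subtype_le_index (H : Subgroup G) [H.Normal] (c : ConjClasses G) :
    (ConjClasses.map H.subtype ⁻¹' {c}).ncard ≤ H.index := by
  rcases (ConjClasses.map H.subtype ⁻¹' {c}).eq_empty_or_nonempty with h | ⟨d₀, hd₀⟩
  · simp [h]
  obtain ⟨h₀, rfl⟩ := ConjClasses.mk_surjective d₀
  let φ : G → ConjClasses H := fun g => ConjClasses.mk (MulAut.conjNormal g h₀)
  have hφ : ∀ (g : G) (k : H), φ (g * k) = φ g := by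
    intro g k
    refine ConjClasses.mk_eq_mk_iff_isConj.mpr (isConj_iff.mpr ⟨MulAut.conjNormal g k⁻¹, ?_⟩)
    ext
    simp only [coe_mul, MulAut.conjNormal_apply, map_mul, MulAut.mul_apply, coe_inv]
    group
  have hsub : ConjClasses.map H.subtype ⁻¹' {c} ⊆ Set.range fun q : G ⧸ H => φ q.out := by
    intro d hd
    obtain ⟨h, rfl⟩ := ConjClasses.mk_surjective d
    obtain ⟨g, hg⟩ := isConj_iff.mp (ConjClasses.mk_eq_mk_iff_isConj.mp (hd₀.trans hd.symm))
    obtain ⟨k, hk⟩ := QuotientGroup.mk_out_eq_mul H g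
    refine ⟨g, ?_⟩
    simp only [hk, hφ]
    exact congrArg ConjClasses.mk (Subtype.ext hg)
  calc _ ≤ (Set.range fun q : G ⧸ H => φ q.out).ncard := Set.ncard_le_ncard hsub
    _ ≤ Nat.card (G ⧸ H) := by rw [← Nat.card_coe_set_eq]; exact Finite.card_range_le _
    _ = H.index := rfl

end Subgroup

theorem ncard_derangement_classes_le_index_mul {G : Type*} [Group G] [Finite G] (Ω : Type*)
    [MulAction G Ω] (H : Subgroup G) [H.Normal] :
    {c : ConjClasses H | ∀ h ∈ ConjClasses.carrier c, ∀ ω : Ω, (h : G) • ω ≠ ω}.ncard ≤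
      H.index *
        {c : ConjClasses G | ∀ g ∈ ConjClasses.carrier c, ∀ ω : Ω, g • ω ≠ ω}.ncard := by
  refine Set.ncard_le_mul_ncard_of_mapsTo (f := ConjClasses.map H.subtype) ?_ H.index
    fun c _ => H.ncard_preimage_map_subtype_le_index c
  rintro d hd g hg
  obtain ⟨h, rfl⟩ := ConjClasses.mk_surjective d
  have hconj : IsConj (h : G) g :=
    (ConjClasses.mk_eq_mk_iff_isConj.mp (ConjClasses.mem_carrier_iff_mk_eq.mp hg)).symm
  exact hconj.forall_smul_ne (hd h ConjClasses.mem_carrier_mk)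

theorem stmt17_general (G : Type) [Group G] [Finite G] (Ω : Type) [MulAction G Ω]
    (H : Subgroup G) (hH : H.Normal) :
    (({c : ConjClasses H | ∀ h ∈ ConjClasses.carrier c, ∀ ω : Ω, (h : G) • ω ≠ ω}.ncard : ℝ) /
        (Nat.card (ConjClasses H) : ℝ)) / ((H.index : ℝ) ^ 2) ≤
      ({c : ConjClasses G | ∀ g ∈ ConjClasses.carrier c, ∀ ω : Ω, g • ω ≠ ω}.ncard : ℝ) /
        (Nat.card (ConjClasses G) : ℝ) := by
  have hd := (Nat.cast_le (α := ℝ)).mpr (ncard_derangement_classes_le_index_mul Ω H)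
  have hk := (Nat.cast_le (α := ℝ)).mpr H.card_conjClasses_le_index_mul
  push_cast at hd hk
  have hm : (0 : ℝ) < H.index := by exact_mod_cast Nat.pos_of_ne_zero H.index_ne_zero_of_finite
  have hkH : (0 : ℝ) < Nat.card (ConjClasses H) := by exact_mod_cast Nat.card_pos
  have hkG : (0 : ℝ) < Nat.card (ConjClasses G) := by exact_mod_cast Nat.card_pos
  rw [div_div, div_le_div_iff₀ (by positivity) hkG]
  calc _ ≤ _ * _ := mul_le_mul hd hk hkG.le (by positivity)
    _ = _ := by ring

/-- **Passing to a normal subgroup for derangement classes.**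
Let `G` be a finite group acting transitively on a nonempty finite set `Ω` and let `H` be a
normal subgroup of `G` (acting by restriction).  Then the proportion of conjugacy classes of
`G` consisting entirely of derangements is at least the corresponding proportion for `H`
divided by `[G : H]²`. -/
theorem stmt17 (G : Type) [Group G] [Finite G] (Ω : Type) [Finite Ω] [Nonempty Ω]
    [MulAction G Ω] (htrans : MulAction.IsPretransitive G Ω)
    (H : Subgroup G) (hH : H.Normal) :
    (({c : ConjClasses H | ∀ h ∈ ConjClasses.carrier c, ∀ ω : Ω, (h : G) • ω ≠ ω}.ncard : ℝ) /
        (Nat.card (ConjClasses H) : ℝ)) / ((H.index : ℝ) ^ 2) ≤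
      ({c : ConjClasses G | ∀ g ∈ ConjClasses.carrier c, ∀ ω : Ω, g • ω ≠ ω}.ncard : ℝ) /
        (Nat.card (ConjClasses G) : ℝ) :=
  stmt17_general G Ω H hH
end
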